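/- arXiv:1603.07701 — 4 statements merged into one kernel-verified Lean document; each statement's English description precedes it below -/
import Mathlib

section
/- Let f : ℝⁿ → ℝ be convex and differentiable with Hölder continuous gradient: ‖∇f(y) − ∇f(x)‖_* ≤ L_ν ‖y − x‖^ν for some ν ∈ [0,1] and all x, y. Then for every δ > 0, setting L = L_ν · (L_ν (1−ν) / (2δ(1+ν)))^((1−ν)/(1+ν)), one has for all x, y: 0 ≤ f(y) − f(x) − ⟨∇f(x), y − x⟩ ≤ (L/2)‖y − x‖² + δ. -/
/-!
Restrict `f` to the segment `t ↦ x + t • (y - x)`. Convexity bounds the slope at `0` by the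
secant slope, giving the lower bound. The Hölder condition makes the derivative of the
restriction grow by at most `Lν ‖y - x‖^(1+ν) t^ν`, so the first-order remainder is at most
`Lν / (1 + ν) ‖y - x‖^(1+ν)`. Weighted AM-GM with weights `(1 + ν) / 2` and `(1 - ν) / 2` then
trades the power `1 + ν` for a quadratic term plus `δ`.
-/

open RealInnerProductSpace Set AffineMap

theorem sub_sub_le_of_deriv_sub_le_mul_rpow {φ φ' : ℝ → ℝ} {C ν : ℝ} (hν : 0 ≤ ν)
    (hφ : ∀ t, HasDerivAt φ (φ' t) t) (hφ' : ∀ t ∈ Ioo (0 : ℝ) 1, φ' t - φ' 0 ≤ C * t ^ ν) :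
    φ 1 - φ 0 - φ' 0 ≤ C / (1 + ν) := by
  have h1ν : 0 < 1 + ν := by linarith
  set ψ : ℝ → ℝ := fun t ↦ φ t - t * φ' 0 - C * t ^ (1 + ν) / (1 + ν)
  have hψ : ∀ t, HasDerivAt ψ (φ' t - φ' 0 - C * t ^ ν) t := by
    intro t
    have hpow : HasDerivAt (fun s : ℝ ↦ s ^ (1 + ν)) ((1 + ν) * t ^ ν) t := by
      simpa using Real.hasDerivAt_rpow_const (x := t) (p := 1 + ν) (Or.inr (by linarith))
    refine (((hφ t).sub (hasDerivAt_mul_const (φ' 0))).sub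
      ((hpow.const_mul C).div_const (1 + ν))).congr_deriv ?_
    field_simp
  have hanti : AntitoneOn ψ (Icc 0 1) := by
    refine antitoneOn_of_hasDerivWithinAt_nonpos (convex_Icc 0 1)
      (fun t _ ↦ (hψ t).continuousAt.continuousWithinAt) (fun t _ ↦ (hψ t).hasDerivWithinAt) ?_
    rw [interior_Icc]
    exact fun t ht ↦ sub_nonpos.2 (hφ' t ht)
  have := hanti (left_mem_Icc.2 zero_le_one) (right_mem_Icc.2 zero_le_one) zero_le_one
  simp only [ψ, Real.one_rpow, Real.zero_rpow h1ν.ne', one_mul, zero_mul, mul_one, mul_zero, zero_div,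
    sub_zero] at this
  linarith

/-- At `ν = 1` this is `Lν`, because `0 ^ 0 = 1` for `Real.rpow`. -/
noncomputable def holderSmoothnessConst (ν Lν δ : ℝ) : ℝ :=
  Lν * ((Lν * (1 - ν)) / (2 * δ * (1 + ν))) ^ ((1 - ν) / (1 + ν))

theorem div_mul_rpow_le_holderSmoothnessConst {ν Lν δ R : ℝ} (hν : ν ∈ Icc (0 : ℝ) 1)
    (hLν : 0 < Lν) (hδ : 0 < δ) (hR : 0 ≤ R) :
    Lν / (1 + ν) * R ^ (1 + ν) ≤ holderSmoothnessConst ν Lν δ / 2 * R ^ 2 + δ := by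
  obtain ⟨hν0, hν1⟩ := hν
  rcases hν1.eq_or_lt with rfl | hν1
  · norm_num [holderSmoothnessConst, hδ.le]
  set θ := (1 + ν) / 2 with hθ
  set c := Lν / (1 + ν) with hc_def
  set B := 2 * δ / (1 - ν) with hB_def
  have hc : 0 < c := by positivity
  have hB : 0 < B := div_pos (by positivity) (by linarith)
  have hK : (Lν * (1 - ν)) / (2 * δ * (1 + ν)) = c / B := by
    rw [hc_def, hB_def]
    field_simp
  have he : (1 - ν) / (1 + ν) * θ = 1 - θ := by
    field_simp
    ring
  set A := c * (c / B) ^ ((1 - ν) / (1 + ν)) with hA_def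
  have hA : 0 ≤ A := by positivity
  have hL : holderSmoothnessConst ν Lν δ = (1 + ν) * A := by
    rw [holderSmoothnessConst, hK, hA_def, hc_def]
    field_simp
  have amgm := Real.geom_mean_le_arith_mean2_weighted (w₁ := θ) (w₂ := 1 - θ) (p₁ := A * R ^ 2)
    (p₂ := B) (by positivity) (by rw [hθ]; linarith) (by positivity) hB.le (by ring)
  have hlhs : (A * R ^ 2) ^ θ * B ^ (1 - θ) = c * R ^ (1 + ν) := by
    have hRθ : (R ^ 2) ^ θ = R ^ (1 + ν) := by
      rw [← Real.rpow_two, ← Real.rpow_mul hR, hθ]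
      ring_nf
    have hAθ : A ^ θ * B ^ (1 - θ) = c := by
      rw [Real.mul_rpow hc.le (by positivity), ← Real.rpow_mul (by positivity), he,
        Real.div_rpow hc.le hB.le, mul_assoc, div_mul_cancel₀ _ (by positivity),
        ← Real.rpow_add hc, add_sub_cancel, Real.rpow_one]
    rw [Real.mul_rpow hA (by positivity), hRθ, ← hAθ]
    ring
  have hrhs : θ * (A * R ^ 2) + (1 - θ) * B = holderSmoothnessConst ν Lν δ / 2 * R ^ 2 + δ := by
    rw [hL, hθ, hB_def]
    field_simp
    ring
  rw [hlhs, hrhs] at amgm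
  exact amgm

section InnerProductSpace

variable {E : Type*} [NormedAddCommGroup E] [InnerProductSpace ℝ E] [CompleteSpace E] {f : E → ℝ}

theorem HasGradientAt.hasDerivAt_comp_lineMap {a x y : E} {t : ℝ}
    (hf : HasGradientAt f a (lineMap (k := ℝ) x y t)) :
    HasDerivAt (f ∘ lineMap (k := ℝ) x y) ⟪a, y - x⟫ t := by
  simpa [InnerProductSpace.toDual_apply_apply] using
    hf.hasFDerivAt.comp_hasDerivAt t hasDerivAt_lineMap

theorem ConvexOn.inner_le_sub_of_hasGradientAt (hf : ConvexOn ℝ univ f) {a x : E}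
    (ha : HasGradientAt f a x) (y : E) : ⟪a, y - x⟫ ≤ f y - f x := by
  have hline : ConvexOn ℝ univ (f ∘ lineMap (k := ℝ) x y) := hf.comp_affineMap (lineMap x y)
  have hderiv : HasDerivAt (f ∘ lineMap (k := ℝ) x y) ⟪a, y - x⟫ 0 :=
    HasGradientAt.hasDerivAt_comp_lineMap (by simpa using ha)
  simpa [slope_def_field] using
    hline.le_slope_of_hasDerivAt (mem_univ 0) (mem_univ 1) zero_lt_one hderiv

theorem sub_sub_inner_le_of_holder {g : E → E} {Nrm Dnrm : E → ℝ} {ν Lν : ℝ}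
    (hgrad : ∀ x, HasGradientAt f (g x) x) (hNrm_nonneg : ∀ x, 0 ≤ Nrm x)
    (hNrm_smul : ∀ (c : ℝ) x, Nrm (c • x) = |c| * Nrm x)
    (hdual : ∀ s y, ⟪s, y⟫ ≤ Dnrm s * Nrm y) (hν : 0 ≤ ν)
    (hHolder : ∀ x y, Dnrm (g y - g x) ≤ Lν * Nrm (y - x) ^ ν) (x y : E) :
    f y - f x - ⟪g x, y - x⟫ ≤ Lν / (1 + ν) * Nrm (y - x) ^ (1 + ν) := by
  set R := Nrm (y - x)
  have hR : 0 ≤ R := hNrm_nonneg _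
  have hbound : ∀ t ∈ Ioo (0 : ℝ) 1,
      ⟪g (lineMap x y t), y - x⟫ - ⟪g (lineMap x y (0 : ℝ)), y - x⟫ ≤ Lν * R ^ (1 + ν) * t ^ ν := by
    rintro t ⟨ht, -⟩
    have hstep : lineMap x y t - x = t • (y - x) := by
      rw [lineMap_apply_module', add_sub_cancel_right]
    calc ⟪g (lineMap x y t), y - x⟫ - ⟪g (lineMap x y (0 : ℝ)), y - x⟫
        = ⟪g (lineMap x y t) - g x, y - x⟫ := by rw [lineMap_apply_zero, inner_sub_left]
      _ ≤ Dnrm (g (lineMap x y t) - g x) * R := hdual _ _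
      _ ≤ Lν * (t * R) ^ ν * R := by
        gcongr
        simpa [hstep, hNrm_smul, abs_of_pos ht] using hHolder x (lineMap x y t)
      _ = Lν * R ^ (1 + ν) * t ^ ν := by
        rw [Real.mul_rpow ht.le hR, Real.rpow_one_add' hR (by linarith)]
        ring
  have := sub_sub_le_of_deriv_sub_le_mul_rpow hν
    (fun t ↦ (hgrad _).hasDerivAt_comp_lineMap) hbound
  simpa [mul_div_right_comm] using this

end InnerProductSpace

/-- Hölder-continuous gradient yields a (δ, L)-oracle with
L = L_ν · (L_ν(1−ν)/(2δ(1+ν)))^((1−ν)/(1+ν)). -/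
theorem stmt0 {n : ℕ} (f : EuclideanSpace ℝ (Fin n) → ℝ)
    (g : EuclideanSpace ℝ (Fin n) → EuclideanSpace ℝ (Fin n))
    (Nrm Dnrm : EuclideanSpace ℝ (Fin n) → ℝ)
    (hNrm_nonneg : ∀ x, 0 ≤ Nrm x)
    (hNrm_smul : ∀ (c : ℝ) x, Nrm (c • x) = |c| * Nrm x)
    (hdual : ∀ s y, |⟪s, y⟫| ≤ Dnrm s * Nrm y)
    (hconv : ConvexOn ℝ Set.univ f)
    (hgrad : ∀ x, HasGradientAt f (g x) x)
    (ν Lν : ℝ) (hν : ν ∈ Set.Icc (0:ℝ) 1) (hLν : 0 < Lν)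
    (hHolder : ∀ x y, Dnrm (g y - g x) ≤ Lν * (Nrm (y - x)) ^ ν)
    (δ : ℝ) (hδ : 0 < δ) :
    ∀ x y, 0 ≤ f y - f x - ⟪g x, y - x⟫ ∧
      f y - f x - ⟪g x, y - x⟫ ≤
        (Lν * ((Lν * (1 - ν)) / (2 * δ * (1 + ν))) ^ ((1 - ν) / (1 + ν))) / 2
          * (Nrm (y - x)) ^ 2 + δ := by
  intro x y
  have hdual' : ∀ s y, ⟪s, y⟫ ≤ Dnrm s * Nrm y := fun s y ↦ (le_abs_self _).trans (hdual s y)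
  refine ⟨sub_nonneg.2 (hconv.inner_le_sub_of_hasGradientAt (hgrad x) y), ?_⟩
  exact (sub_sub_inner_le_of_holder hgrad hNrm_nonneg hNrm_smul hdual' hν.1 hHolder x y).trans
    (div_mul_rpow_le_holderSmoothnessConst hν hLν hδ (hNrm_nonneg _))
end

section
/- For any a, r, δ > 0 and ν ∈ [0,1), and any real t ≥ 0: (a/(1+ν)) t^(1+ν) ≤ (L/2) t² + δ where L = a · ((1−ν)a / (2δ(1+ν)))^((1−ν)/(1+ν)). In other words, the Hölder upper bound (a/(1+ν))t^(1+ν) is dominated by a quadratic plus additive error δ with this choice of L. -/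
/-! Weighted AM–GM with weights `(1+ν)/2` and `(1-ν)/2`, applied to `l t²` and
`l ^ (-(1+ν)/(1-ν))`, bounds `t^(1+ν)` by a quadratic plus a constant for every scale `l > 0`;
the choice `l = c ^ ((1-ν)/(1+ν))` with `c = (1-ν)a / (2δ(1+ν))` makes the constant equal `δ`. -/

open Real

theorem Real.rpow_one_add_le_mul_sq_add_rpow {ν l t : ℝ} (hν : -1 ≤ ν) (hν1 : ν < 1)
    (hl : 0 < l) (ht : 0 ≤ t) :
    t ^ (1 + ν) ≤ (1 + ν) / 2 * (l * t ^ 2) + (1 - ν) / 2 * l ^ (-((1 + ν) / (1 - ν))) := by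
  have amgm := geom_mean_le_arith_mean2_weighted (w₁ := (1 + ν) / 2) (w₂ := (1 - ν) / 2)
    (by linarith) (by linarith) (mul_nonneg hl.le (sq_nonneg t))
    (rpow_nonneg hl.le (-((1 + ν) / (1 - ν)))) (by ring)
  have hprod : (l * t ^ 2) ^ ((1 + ν) / 2) * (l ^ (-((1 + ν) / (1 - ν)))) ^ ((1 - ν) / 2)
      = t ^ (1 + ν) := by
    have hl_exp : (1 + ν) / 2 + -((1 + ν) / (1 - ν)) * ((1 - ν) / 2) = 0 := by
      field_simp [show 1 - ν ≠ 0 by linarith]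
      ring
    rw [mul_rpow hl.le (by positivity), ← rpow_natCast t 2, ← rpow_mul ht, ← rpow_mul hl.le,
      mul_right_comm, ← rpow_add hl, hl_exp, rpow_zero, one_mul,
      Nat.cast_ofNat, mul_div_cancel₀ _ two_ne_zero]
  rwa [hprod] at amgm

theorem stmt2_general (a δ ν : ℝ) (ha : 0 < a) (hδ : 0 < δ)
    (hν : ν ∈ Set.Ico (0:ℝ) 1) (t : ℝ) (ht : 0 ≤ t) :
    (a / (1 + ν)) * t ^ (1 + ν) ≤
      (a * (((1 - ν) * a) / (2 * δ * (1 + ν))) ^ ((1 - ν) / (1 + ν))) / 2 * t ^ 2 + δ := by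
  obtain ⟨hν0, hν1⟩ := hν
  set c := ((1 - ν) * a) / (2 * δ * (1 + ν))
  have hc : 0 < c := div_pos (mul_pos (by linarith) ha) (by positivity)
  have hc_inv : (c ^ ((1 - ν) / (1 + ν))) ^ (-((1 + ν) / (1 - ν))) = c⁻¹ := by
    rw [← rpow_mul hc.le, ← rpow_neg_one]
    congr 1
    field_simp [show 1 - ν ≠ 0 by linarith]
  have key := rpow_one_add_le_mul_sq_add_rpow (by linarith) hν1
    (rpow_pos_of_pos hc ((1 - ν) / (1 + ν))) ht
  rw [hc_inv] at key
  calc a / (1 + ν) * t ^ (1 + ν)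
      ≤ a / (1 + ν) * ((1 + ν) / 2 * (c ^ ((1 - ν) / (1 + ν)) * t ^ 2) + (1 - ν) / 2 * c⁻¹) :=
        mul_le_mul_of_nonneg_left key (by positivity)
    _ = _ := by
        simp only [c, inv_div]
        field_simp

/-- Scalar Young-inequality computation: the Hölder upper bound
(a/(1+ν)) t^(1+ν) is dominated by (L/2) t² + δ with
L = a·((1−ν)a/(2δ(1+ν)))^((1−ν)/(1+ν)). -/
theorem stmt2 (a r δ ν : ℝ) (ha : 0 < a) (hr : 0 < r) (hδ : 0 < δ)
    (hν : ν ∈ Set.Ico (0:ℝ) 1) (t : ℝ) (ht : 0 ≤ t) :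
    (a / (1 + ν)) * t ^ (1 + ν) ≤
      (a * (((1 - ν) * a) / (2 * δ * (1 + ν))) ^ ((1 - ν) / (1 + ν))) / 2 * t ^ 2 + δ :=
  stmt2_general a δ ν ha hδ hν t ht
end

section
/- Let F : Q → ℝ be convex, x⁰ ∈ Q, and let V(x, x⁰) be a Bregman prox-distance that is nonnegative. Define F^γ(x) = F(x) + γ V(x, x⁰) for γ > 0. Let x_* minimize F over Q, and suppose γ ≤ ε / (2 V(x_*, x⁰)). If y ∈ Q satisfies F^γ(y) − min_Q F^γ ≤ ε/2, then F(y) − F(x_*) ≤ ε. -/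
/-- Regularization lemma: if γ ≤ ε/(2 V(x_*, x⁰)) and y is an ε/2-solution of
the regularized problem F + γV, then y is an ε-solution of the original
problem. -/
theorem stmt6 {E : Type*} [NormedAddCommGroup E] [NormedSpace ℝ E]
    (Q : Set E) (hQ : Convex ℝ Q) (F : E → ℝ) (hF : ConvexOn ℝ Q F)
    (V : E → ℝ) (hV : ∀ x, 0 ≤ V x) (γ ε : ℝ) (hγ : 0 < γ) (hε : 0 < ε)
    (xs : E) (hxs : xs ∈ Q) (hmin : ∀ x ∈ Q, F xs ≤ F x)
    (hγle : γ ≤ ε / (2 * V xs))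
    (y : E) (hy : y ∈ Q)
    (hy_sol : ∀ x ∈ Q, F y + γ * V y ≤ F x + γ * V x + ε / 2) :
    F y - F xs ≤ ε := by
  have h1 := hy_sol xs hxs
  have h2 : γ * V xs ≤ ε / 2 := by
    rcases eq_or_lt_of_le (hV xs) with h | h
    · rw [← h]; nlinarith
    · rw [le_div_iff₀ (by positivity)] at hγle
      nlinarith
  have h3 : 0 ≤ γ * V y := mul_nonneg hγ.le (hV y)
  linarith
end

section
/- For the sequence α₁ = 1/L, α_{k+1} = 1/(2L) + √(1/(4L²) + α_k²), one has the bounds (k+1)/(2L) ≤ α_k ≤ k/L for all k ≥ 1; in particular A_N = L α_N² ≥ (N+1)²/(4L). -/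
/-!
With `c = 1/(2L)` the recursion reads `α (k+1) = c + √(c² + α k ²)`, and since
`a ≤ √(c² + a²) ≤ c + a` for `a, c ≥ 0`, each step increases `α` by between `c` and `2c`.
Starting from `α 1 = 2c`, this gives `(k+1) c ≤ α k ≤ 2 k c`; squaring the lower bound
gives the bound on `A_N = L α_N²`.
-/

noncomputable def nesterovStep (c a : ℝ) : ℝ := c + √(c ^ 2 + a ^ 2)

lemma add_le_nesterovStep (c a : ℝ) : c + a ≤ nesterovStep c a :=
  add_le_add_right (Real.le_sqrt_of_sq_le (le_add_of_nonneg_left (sq_nonneg c))) c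

lemma nesterovStep_le {c a : ℝ} (hc : 0 ≤ c) (ha : 0 ≤ a) : nesterovStep c a ≤ 2 * c + a := by
  have hsqrt : √(c ^ 2 + a ^ 2) ≤ c + a :=
    Real.sqrt_le_iff.mpr ⟨by positivity, by nlinarith [mul_nonneg hc ha]⟩
  unfold nesterovStep
  linarith

section NesterovSequence

variable {c : ℝ} {a : ℕ → ℝ} (h₁ : a 1 = 2 * c)
  (hstep : ∀ k, 1 ≤ k → a (k + 1) = nesterovStep c (a k))
include h₁ hstep

lemma nesterovSeq_lower_bound : ∀ k : ℕ, 1 ≤ k → ((k : ℝ) + 1) * c ≤ a k := by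
  refine Nat.le_induction (by norm_num [h₁]) fun k hk ih => ?_
  calc ((k + 1 : ℕ) + 1 : ℝ) * c = c + ((k : ℝ) + 1) * c := by push_cast; ring
    _ ≤ c + a k := by gcongr
    _ ≤ a (k + 1) := hstep k hk ▸ add_le_nesterovStep c (a k)

lemma nesterovSeq_upper_bound (hc : 0 ≤ c) : ∀ k : ℕ, 1 ≤ k → a k ≤ 2 * k * c := by
  refine Nat.le_induction (by norm_num [h₁]) fun k hk ih => ?_
  have ha : 0 ≤ a k := le_trans (by positivity) (nesterovSeq_lower_bound h₁ hstep k hk)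
  calc a (k + 1) ≤ 2 * c + a k := hstep k hk ▸ nesterovStep_le hc ha
    _ ≤ 2 * c + 2 * k * c := by gcongr
    _ = 2 * (k + 1 : ℕ) * c := by push_cast; ring

end NesterovSequence

/-- Growth bounds (k+1)/(2L) ≤ α_k ≤ k/L for the fast-gradient step sizes;
in particular A_N = L α_N² ≥ (N+1)²/(4L). -/
theorem stmt13 (L : ℝ) (hL : 0 < L) (α : ℕ → ℝ)
    (hα1 : α 1 = 1 / L)
    (hαrec : ∀ k, 1 ≤ k →
      α (k + 1) = 1 / (2 * L) + Real.sqrt (1 / (4 * L ^ 2) + (α k) ^ 2)) :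
    (∀ k : ℕ, 1 ≤ k → ((k : ℝ) + 1) / (2 * L) ≤ α k ∧ α k ≤ (k : ℝ) / L) ∧
      (∀ N : ℕ, 1 ≤ N → ((N : ℝ) + 1) ^ 2 / (4 * L) ≤ L * (α N) ^ 2) := by
  have h₁ : α 1 = 2 * (1 / (2 * L)) := by rw [hα1]; field_simp
  have hstep : ∀ k, 1 ≤ k → α (k + 1) = nesterovStep (1 / (2 * L)) (α k) := fun k hk => by
    rw [hαrec k hk, nesterovStep]; ring_nf
  have hlower (k : ℕ) (hk : 1 ≤ k) : ((k : ℝ) + 1) / (2 * L) ≤ α k := by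
    calc ((k : ℝ) + 1) / (2 * L) = ((k : ℝ) + 1) * (1 / (2 * L)) := by ring
      _ ≤ α k := nesterovSeq_lower_bound h₁ hstep k hk
  refine ⟨fun k hk => ⟨hlower k hk, ?_⟩, fun N hN => ?_⟩
  · calc α k ≤ 2 * k * (1 / (2 * L)) := nesterovSeq_upper_bound h₁ hstep (by positivity) k hk
      _ = k / L := by field_simp
  · calc ((N : ℝ) + 1) ^ 2 / (4 * L) = L * (((N : ℝ) + 1) / (2 * L)) ^ 2 := by field_simp; ring
      _ ≤ L * (α N) ^ 2 := by gcongr; exact hlower N hN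
end
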